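/- arXiv:2604.27458 — 2 statements merged into one kernel-verified Lean document; each statement's English description precedes it below -/
import Mathlib

section
/- Let F : ℝ → ℝ^{d+1} be Lipschitz with constant L on a set containing all values below, and define Q(a,k) = (F(a) - F(k)) · sgn(a-k) (componentwise scalar multiplication by the sign). Then for all a, k, l in a bounded interval I on which F is L-Lipschitz, |Q(a,k) - Q(a,l)| ≤ 2L|k - l|. -/
theorem kruzkov_flux_lipschitz_second (d : ℕ)
    (F : ℝ → EuclideanSpace ℝ (Fin (d+1))) (I : Set ℝ) (L : NNReal)
    (hF : LipschitzOnWith L F I) :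
    ∀ a ∈ I, ∀ k ∈ I, ∀ l ∈ I,
      ‖Real.sign (a - k) • (F a - F k) - Real.sign (a - l) • (F a - F l)‖
        ≤ 2 * (L : ℝ) * |k - l| := by
  intro a ha k hk l hl
  have hLnn : (0:ℝ) ≤ (L:ℝ) := L.coe_nonneg
  have hFk : ‖F a - F k‖ ≤ (L:ℝ) * |a - k| := by
    simpa [dist_eq_norm, Real.dist_eq] using hF.dist_le_mul a ha k hk
  have hFl : ‖F a - F l‖ ≤ (L:ℝ) * |a - l| := by
    simpa [dist_eq_norm, Real.dist_eq] using hF.dist_le_mul a ha l hl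
  have hFkl : ‖F k - F l‖ ≤ (L:ℝ) * |k - l| := by
    simpa [dist_eq_norm, Real.dist_eq] using hF.dist_le_mul k hk l hl
  have hsm : ∀ (x : ℝ) (v : EuclideanSpace ℝ (Fin (d+1))),
      ‖Real.sign x • v‖ ≤ ‖v‖ := by
    intro x v
    have habs : |Real.sign x| ≤ 1 := by
      rcases lt_trichotomy x 0 with h | h | h
      · simp [Real.sign_of_neg h]
      · simp [h]
      · simp [Real.sign_of_pos h]
    calc ‖Real.sign x • v‖ = |Real.sign x| * ‖v‖ := by rw [norm_smul, Real.norm_eq_abs]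
      _ ≤ 1 * ‖v‖ := mul_le_mul_of_nonneg_right habs (norm_nonneg _)
      _ = ‖v‖ := one_mul _
  have htri : ‖Real.sign (a - k) • (F a - F k) - Real.sign (a - l) • (F a - F l)‖
      ≤ (L:ℝ) * |a - k| + (L:ℝ) * |a - l| :=
    (norm_sub_le _ _).trans
      (add_le_add ((hsm _ _).trans hFk) ((hsm _ _).trans hFl))
  rcases lt_trichotomy a k with h1 | h1 | h1 <;> rcases lt_trichotomy a l with h2 | h2 | h2
  -- a < k, a < l : same sign (-1)
  · have s1 : Real.sign (a - k) = -1 := Real.sign_of_neg (by linarith)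
    have s2 : Real.sign (a - l) = -1 := Real.sign_of_neg (by linarith)
    rw [s1, s2]
    have heq : (-1:ℝ) • (F a - F k) - (-1:ℝ) • (F a - F l) = F k - F l := by module
    rw [heq]
    calc ‖F k - F l‖ ≤ (L:ℝ) * |k - l| := hFkl
      _ ≤ 2 * (L:ℝ) * |k - l| := by nlinarith [abs_nonneg (k - l)]
  -- a < k, a = l
  · have s2 : Real.sign (a - l) = 0 := by simp [h2]
    rw [s2, zero_smul, sub_zero]
    calc ‖Real.sign (a - k) • (F a - F k)‖ ≤ ‖F a - F k‖ := hsm _ _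
      _ ≤ (L:ℝ) * |a - k| := hFk
      _ ≤ 2 * (L:ℝ) * |k - l| := by
          subst h2
          rw [abs_sub_comm k a]
          nlinarith [abs_nonneg (a - k)]
  -- l < a < k : between
  · refine htri.trans ?_
    rw [abs_of_nonpos (by linarith : a - k ≤ 0), abs_of_nonneg (by linarith : 0 ≤ a - l),
      abs_of_nonneg (by linarith : 0 ≤ k - l)]
    nlinarith
  -- a = k cases
  · have s1 : Real.sign (a - k) = 0 := by simp [h1]
    rw [s1, zero_smul, zero_sub, norm_neg]
    calc ‖Real.sign (a - l) • (F a - F l)‖ ≤ ‖F a - F l‖ := hsm _ _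
      _ ≤ (L:ℝ) * |a - l| := hFl
      _ ≤ 2 * (L:ℝ) * |k - l| := by subst h1; nlinarith [abs_nonneg (a - l)]
  · have s1 : Real.sign (a - k) = 0 := by simp [h1]
    rw [s1, zero_smul, zero_sub, norm_neg]
    calc ‖Real.sign (a - l) • (F a - F l)‖ ≤ ‖F a - F l‖ := hsm _ _
      _ ≤ (L:ℝ) * |a - l| := hFl
      _ ≤ 2 * (L:ℝ) * |k - l| := by subst h1; nlinarith [abs_nonneg (a - l)]
  · have s1 : Real.sign (a - k) = 0 := by simp [h1]
    rw [s1, zero_smul, zero_sub, norm_neg]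
    calc ‖Real.sign (a - l) • (F a - F l)‖ ≤ ‖F a - F l‖ := hsm _ _
      _ ≤ (L:ℝ) * |a - l| := hFl
      _ ≤ 2 * (L:ℝ) * |k - l| := by subst h1; nlinarith [abs_nonneg (a - l)]
  -- k < a < l : between
  · refine htri.trans ?_
    rw [abs_of_nonneg (by linarith : 0 ≤ a - k), abs_of_nonpos (by linarith : a - l ≤ 0),
      abs_of_nonpos (by linarith : k - l ≤ 0)]
    nlinarith
  -- a > k, a = l
  · have s2 : Real.sign (a - l) = 0 := by simp [h2]
    rw [s2, zero_smul, sub_zero]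
    calc ‖Real.sign (a - k) • (F a - F k)‖ ≤ ‖F a - F k‖ := hsm _ _
      _ ≤ (L:ℝ) * |a - k| := hFk
      _ ≤ 2 * (L:ℝ) * |k - l| := by subst h2; rw [abs_sub_comm k a]; nlinarith [abs_nonneg (a - k)]
  -- a > k, a > l : same sign 1
  · have s1 : Real.sign (a - k) = 1 := Real.sign_of_pos (by linarith)
    have s2 : Real.sign (a - l) = 1 := Real.sign_of_pos (by linarith)
    rw [s1, s2]
    have heq : (1:ℝ) • (F a - F k) - (1:ℝ) • (F a - F l) = F l - F k := by module
    rw [heq]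
    calc ‖F l - F k‖ = ‖F k - F l‖ := norm_sub_rev _ _
      _ ≤ (L:ℝ) * |k - l| := hFkl
      _ ≤ 2 * (L:ℝ) * |k - l| := by nlinarith [abs_nonneg (k - l)]
end

section
/- Let a(x) = p·x + α and b(x) = q·x + β be affine functions on ℝ^d with p ≠ q, and let d(x) = a(x) - b(x). For a bounded measurable set Ω ⊆ ℝ^d and constants C, c > 0, the integral ∫_Ω exp(-c·τ·|d(x)|) dx is at most C_Ω/τ for some constant C_Ω depending only on Ω, c, and |p - q| (not on τ), for all τ ≥ 1. -/
/-!
After a rotation taking the unit vector `(p - q) / ‖p - q‖` to the first coordinate axis, the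
integrand depends on a single coordinate `t` and equals `exp (-(c τ |‖p - q‖ t + α - β|))`.
On a ball of radius `R` containing `Ω` it coincides with the product of this function of `t` and
the indicators of `[-R, R]` in the other coordinates, whose integral over the whole space factors
by Fubini as `2 / (c τ ‖p - q‖) · (2R) ^ (d - 1)`.
-/

open MeasureTheory Metric

theorem integral_exp_neg_abs : ∫ t : ℝ, Real.exp (-|t|) = 2 := by
  rw [integral_comp_abs (f := fun t => Real.exp (-t)), integral_exp_neg_Ioi_zero, mul_one]

theorem integral_exp_neg_mul_abs_mul_add {A : ℝ} (hA : 0 < A) {m : ℝ} (hm : m ≠ 0) (γ : ℝ) :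
    ∫ t : ℝ, Real.exp (-(A * |m * t + γ|)) = 2 / (A * |m|) := by
  have h := Measure.integral_comp_mul_left (fun s : ℝ => Real.exp (-|s + A * γ|)) (A * m)
  simp only [integral_add_right_eq_self (fun s : ℝ => Real.exp (-|s|)), integral_exp_neg_abs] at h
  calc ∫ t : ℝ, Real.exp (-(A * |m * t + γ|))
      = ∫ t : ℝ, Real.exp (-|A * m * t + A * γ|) := by
        congr 1 with t
        rw [mul_assoc, ← mul_add, abs_mul, abs_of_pos hA]
    _ = 2 / (A * |m|) := by
        rw [h, smul_eq_mul, abs_inv, abs_mul, abs_of_pos hA]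
        field_simp

theorem integrable_exp_neg_mul_abs_mul_add {A : ℝ} (hA : 0 < A) {m : ℝ} (hm : m ≠ 0) (γ : ℝ) :
    Integrable fun t : ℝ => Real.exp (-(A * |m * t + γ|)) :=
  .of_integral_ne_zero <| by
    rw [integral_exp_neg_mul_abs_mul_add hA hm]
    positivity

theorem EuclideanSpace.integral_prod_apply {ι : Type*} [Fintype ι] (f : ι → ℝ → ℝ) :
    ∫ x : EuclideanSpace ℝ ι, ∏ i, f i (x i) = ∏ i, ∫ t, f i t := by
  rw [← (EuclideanSpace.volume_preserving_symm_measurableEquiv_toLp ι).symm.integral_comp'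
    (fun x : EuclideanSpace ℝ ι => ∏ i, f i (x i))]
  exact integral_fintype_prod_eq_prod f

theorem EuclideanSpace.integrable_prod_apply {ι : Type*} [Fintype ι] {f : ι → ℝ → ℝ}
    (hf : ∀ i, Integrable (f i)) : Integrable fun x : EuclideanSpace ℝ ι => ∏ i, f i (x i) := by
  rw [← (EuclideanSpace.volume_preserving_symm_measurableEquiv_toLp ι).symm.integrable_comp_emb
    (MeasurableEquiv.measurableEmbedding _)]
  exact Integrable.fintype_prod (𝕜 := ℝ) hf

theorem exists_orthonormalBasis_apply_eq {𝕜 E ι : Type*} [RCLike 𝕜] [NormedAddCommGroup E]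
    [InnerProductSpace 𝕜 E] [FiniteDimensional 𝕜 E] [Fintype ι]
    (h : Module.finrank 𝕜 E = Fintype.card ι) (i : ι) {u : E} (hu : ‖u‖ = 1) :
    ∃ b : OrthonormalBasis ι 𝕜 E, b i = u := by
  have hon : Orthonormal 𝕜 (({i} : Set ι).domRestrict fun _ => u) := by
    refine ⟨fun _ => hu, fun j k hjk => absurd (Subsingleton.elim j k) hjk⟩
  obtain ⟨b, hb⟩ := hon.exists_orthonormalBasis_extension_of_card_eq h
  exact ⟨b, hb i rfl⟩

theorem EuclideanSpace.setIntegral_closedBall_apply_le {ι : Type*} [Fintype ι] [DecidableEq ι]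
    {f : ℝ → ℝ} (hf₀ : 0 ≤ f) (hf : Integrable f) (i : ι) {R : ℝ} (hR : 0 ≤ R) :
    ∫ x in closedBall (0 : EuclideanSpace ℝ ι) R, f (x i)
      ≤ (∫ t, f t) * (2 * R) ^ (Fintype.card ι - 1) := by
  set g : ι → ℝ → ℝ := Function.update (fun _ => (Set.Icc (-R) R).indicator 1) i f
  have hg₀ : ∀ j t, 0 ≤ g j t := by
    intro j t
    rcases eq_or_ne j i with rfl | hj
    · simpa [g] using hf₀ t
    · simp only [g, Function.update_of_ne hj]
      exact Set.indicator_nonneg (fun _ _ => zero_le_one) t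
  have hg : ∀ j, Integrable (g j) := by
    intro j
    rcases eq_or_ne j i with rfl | hj
    · simpa [g] using hf
    · simp only [g, Function.update_of_ne hj]
      exact (integrable_indicator_iff measurableSet_Icc).2
        (integrableOn_const measure_Icc_lt_top.ne)
  have hg_int : ∀ j, ∫ t, g j t = Function.update (fun _ => 2 * R) i (∫ t, f t) j := by
    intro j
    rcases eq_or_ne j i with rfl | hj
    · simp [g]
    · simp only [g, Function.update_of_ne hj]
      rw [integral_indicator_one measurableSet_Icc, Real.volume_real_Icc_of_le (by linarith)]
      ring
  have h_eq : ∀ x ∈ closedBall (0 : EuclideanSpace ℝ ι) R, f (x i) = ∏ j, g j (x j) := by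
    intro x hx
    rw [Finset.prod_eq_single i (fun j _ hj => ?_) (by simp)]
    · simp [g]
    · have hxj : |x j| ≤ R := (PiLp.norm_apply_le x j).trans (mem_closedBall_zero_iff.1 hx)
      simp [g, Function.update_of_ne hj, abs_le.1 hxj]
  calc ∫ x in closedBall (0 : EuclideanSpace ℝ ι) R, f (x i)
      = ∫ x in closedBall (0 : EuclideanSpace ℝ ι) R, ∏ j, g j (x j) :=
        setIntegral_congr_fun measurableSet_closedBall h_eq
    _ ≤ ∫ x : EuclideanSpace ℝ ι, ∏ j, g j (x j) :=
        setIntegral_le_integral (EuclideanSpace.integrable_prod_apply hg)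
          (.of_forall fun x => Finset.prod_nonneg fun j _ => hg₀ j (x j))
    _ = (∫ t, f t) * (2 * R) ^ (Fintype.card ι - 1) := by
        rw [EuclideanSpace.integral_prod_apply, Finset.prod_congr rfl fun j _ => hg_int j,
          Finset.prod_update_of_mem (Finset.mem_univ i), Finset.prod_const,
          Finset.card_sdiff_of_subset (by simp), Finset.card_univ, Finset.card_singleton]

theorem setIntegral_closedBall_inner_le {E : Type*} [NormedAddCommGroup E]
    [InnerProductSpace ℝ E] [FiniteDimensional ℝ E] [MeasurableSpace E] [BorelSpace E]
    {f : ℝ → ℝ} (hf₀ : 0 ≤ f) (hf : Integrable f) {u : E} (hu : ‖u‖ = 1) {R : ℝ} (hR : 0 ≤ R) :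
    ∫ x in closedBall (0 : E) R, f (inner ℝ u x)
      ≤ (∫ t, f t) * (2 * R) ^ (Module.finrank ℝ E - 1) := by
  have hpos : 0 < Module.finrank ℝ E := by
    have : Nontrivial E := ⟨u, 0, by rintro rfl; simp at hu⟩
    exact Module.finrank_pos
  let i : Fin (Module.finrank ℝ E) := ⟨0, hpos⟩
  obtain ⟨b, hb⟩ := exists_orthonormalBasis_apply_eq (Fintype.card_fin _).symm i hu
  have h_repr : ∀ x, inner ℝ u x = b.repr x i := fun x => by rw [b.repr_apply_apply, hb]
  calc ∫ x in closedBall (0 : E) R, f (inner ℝ u x)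
      = ∫ x in b.repr ⁻¹' closedBall 0 R, f (b.repr x i) := by
        simp only [h_repr, LinearIsometryEquiv.preimage_closedBall, map_zero]
    _ = ∫ y in closedBall (0 : EuclideanSpace ℝ (Fin _)) R, f (y i) :=
        b.measurePreserving_repr.setIntegral_preimage_emb
          b.repr.toHomeomorph.measurableEmbedding (fun y => f (y i)) _
    _ ≤ _ := by
        simpa only [Fintype.card_fin] using
          EuclideanSpace.setIntegral_closedBall_apply_le hf₀ hf i hR

theorem affine_exponential_slice_bound_general (d : ℕ)
    (p q : EuclideanSpace ℝ (Fin d)) (α β : ℝ) (hpq : p ≠ q)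
    (Ω : Set (EuclideanSpace ℝ (Fin d)))
    (hΩb : Bornology.IsBounded Ω) (c : ℝ) (hc : 0 < c) :
    ∃ C > (0 : ℝ), ∀ τ ≥ (1 : ℝ),
      (∫ x in Ω, Real.exp (-(c * τ * |(inner ℝ (p - q) x : ℝ) + (α - β)|)))
        ≤ C / τ := by
  set v := p - q
  have hv : 0 < ‖v‖ := norm_pos_iff.2 (sub_ne_zero.2 hpq)
  set u := ‖v‖⁻¹ • v
  have hu : ‖u‖ = 1 := by rw [norm_smul, norm_inv, norm_norm, inv_mul_cancel₀ hv.ne']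
  obtain ⟨R, hR, hΩR⟩ := hΩb.subset_closedBall_lt 0 0
  refine ⟨2 / (c * ‖v‖) * (2 * R) ^ (d - 1), by positivity, fun τ hτ => ?_⟩
  have hcτ : 0 < c * τ := by positivity
  set f : ℝ → ℝ := fun t => Real.exp (-(c * τ * |‖v‖ * t + (α - β)|))
  have h_inner : ∀ x, inner ℝ v x = ‖v‖ * inner ℝ u x := fun x => by
    rw [real_inner_smul_left, mul_inv_cancel_left₀ hv.ne']
  have h_cont : Continuous fun x : EuclideanSpace ℝ (Fin d) => f (inner ℝ u x) := by
    fun_prop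
  calc ∫ x in Ω, Real.exp (-(c * τ * |(inner ℝ v x : ℝ) + (α - β)|))
      = ∫ x in Ω, f (inner ℝ u x) := by simp_rw [f, h_inner]
    _ ≤ ∫ x in closedBall 0 R, f (inner ℝ u x) :=
        setIntegral_mono_set (h_cont.continuousOn.integrableOn_compact (isCompact_closedBall 0 R))
          (.of_forall fun _ => (Real.exp_pos _).le) (.of_forall hΩR)
    _ ≤ (∫ t, f t) * (2 * R) ^ (d - 1) := by
        simpa only [finrank_euclideanSpace_fin] using
          setIntegral_closedBall_inner_le (E := EuclideanSpace ℝ (Fin d)) (f := f)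
            (fun _ => (Real.exp_pos _).le) (integrable_exp_neg_mul_abs_mul_add hcτ hv.ne' _)
            hu hR.le
    _ = 2 / (c * ‖v‖) * (2 * R) ^ (d - 1) / τ := by
        rw [integral_exp_neg_mul_abs_mul_add hcτ hv.ne', abs_of_pos hv]
        field_simp

theorem affine_exponential_slice_bound (d : ℕ)
    (p q : EuclideanSpace ℝ (Fin d)) (α β : ℝ) (hpq : p ≠ q)
    (Ω : Set (EuclideanSpace ℝ (Fin d))) (hΩm : MeasurableSet Ω)
    (hΩb : Bornology.IsBounded Ω) (c : ℝ) (hc : 0 < c) :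
    ∃ C > (0 : ℝ), ∀ τ ≥ (1 : ℝ),
      (∫ x in Ω, Real.exp (-(c * τ * |(inner ℝ (p - q) x : ℝ) + (α - β)|)))
        ≤ C / τ :=
  affine_exponential_slice_bound_general d p q α β hpq Ω hΩb c hc
end
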